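/- Let M be a frame, (g_n) a sequence of frame homomorphisms Opens ℝ → M, f : Opens ℝ → M a frame homomorphism, k a positive integer, and m an index such that for all i, j ≥ m and all ε > 0, ⨆_{s ∈ ℝ} [ (g_i((−∞,s)) ⊓ g_j((s+ε,∞))) ⊔ (g_j((−∞,s)) ⊓ g_i((s+ε,∞))) ] ≤ f((kε, ∞)). Then for every j ≥ m, every r ∈ ℝ, and every ε > 0: g_m((−∞, r − ε)) ⊓ f((−∞, kε)) ≤ g_j((−∞, r)) and g_m((r + ε, ∞)) ⊓ f((−∞, kε)) ≤ g_j((r, ∞)). -/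
import Mathlib


open TopologicalSpace Set

/-- The open interval `(a, ∞)` as an open subset of `ℝ`. -/
def oIoi (a : ℝ) : Opens ℝ := ⟨Set.Ioi a, isOpen_Ioi⟩

/-- The open interval `(-∞, a)` as an open subset of `ℝ`. -/
def oIio (a : ℝ) : Opens ℝ := ⟨Set.Iio a, isOpen_Iio⟩

/-- The open interval `(a, b)` as an open subset of `ℝ`. -/
def oIoo (a b : ℝ) : Opens ℝ := ⟨Set.Ioo a b, isOpen_Ioo⟩

lemma oIio_eq_iSup (a : ℝ) : oIio a = ⨆ b : Iio a, oIio (b : ℝ) := by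
  ext x
  simp only [oIio, Opens.coe_mk, Opens.coe_iSup, Set.mem_iUnion, Set.mem_Iio]
  constructor
  · intro hx
    obtain ⟨b, hb1, hb2⟩ := exists_between hx
    exact ⟨⟨b, hb2⟩, hb1⟩
  · rintro ⟨⟨b, hb⟩, hxb⟩
    exact lt_trans hxb hb

lemma oIio_sup_oIoi (s r : ℝ) (h : s < r) : oIio r ⊔ oIoi s = ⊤ := by
  ext x
  simp only [oIio, oIoi, Opens.coe_sup, Opens.coe_mk, Set.mem_union, Set.mem_Iio, Set.mem_Ioi,
    Opens.coe_top, Set.mem_univ, iff_true]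
  rcases lt_or_ge x r with h' | h'
  · exact Or.inl h'
  · exact Or.inr (lt_of_lt_of_le h h')

lemma oIio_inf_oIoi (a : ℝ) : oIio a ⊓ oIoi a = ⊥ := by
  ext x
  simp only [oIio, oIoi, Opens.coe_inf, Opens.coe_mk, Set.mem_inter_iff, Set.mem_Iio,
    Set.mem_Ioi, Opens.coe_bot, Set.mem_empty_iff_false, iff_false, not_and]
  intro h h'
  exact absurd h' (not_lt.mpr h.le)

lemma oIio_mono {a b : ℝ} (h : a ≤ b) : oIio a ≤ oIio b := by
  intro x hx
  exact lt_of_lt_of_le hx h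


/-- Lemma 18: if `|g_i − g_j| ≤ f/k` for all `i, j ≥ m`, then for all `j ≥ m`, `r ∈ ℝ` and
`ε > 0`, `g_m((−∞,r−ε)) ⊓ f((−∞,kε)) ≤ g_j((−∞,r))` and
`g_m((r+ε,∞)) ⊓ f((−∞,kε)) ≤ g_j((r,∞))`. -/
theorem cauchy_tail_estimates {M : Type*} [Order.Frame M]
    (g : ℕ → FrameHom (Opens ℝ) M) (f : FrameHom (Opens ℝ) M) (k : ℕ) (hk : 0 < k) (m : ℕ)
    (hC : ∀ i, m ≤ i → ∀ j, m ≤ j → ∀ ε : ℝ, 0 < ε →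
      (⨆ s : ℝ, (g i (oIio s) ⊓ g j (oIoi (s + ε))) ⊔ (g j (oIio s) ⊓ g i (oIoi (s + ε)))) ≤
        f (oIoi ((k : ℝ) * ε))) :
    ∀ j, m ≤ j → ∀ r ε : ℝ, 0 < ε →
      g m (oIio (r - ε)) ⊓ f (oIio ((k : ℝ) * ε)) ≤ g j (oIio r) ∧
      g m (oIoi (r + ε)) ⊓ f (oIio ((k : ℝ) * ε)) ≤ g j (oIoi r) := by
  intro j hj r ε hε
  have hk' : (0 : ℝ) < k := Nat.cast_pos.mpr hk
  have hkε : (0 : ℝ) < (k : ℝ) * ε := mul_pos hk' hε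
  -- the common reduction: for each b < k*ε, produce c with 0 < c < k*ε and b ≤ c,
  -- then η := c/k with 0 < η < ε and k*η = c.
  have key : ∀ b : ℝ, b < (k : ℝ) * ε → ∃ η : ℝ, 0 < η ∧ η < ε ∧
      oIio b ≤ oIio ((k:ℝ) * η) := by
    intro b hb
    set c : ℝ := max b ((k : ℝ) * ε / 2) with hc
    have hc0 : 0 < c := lt_max_of_lt_right (by positivity)
    have hck : c < (k : ℝ) * ε := max_lt hb (by linarith)
    refine ⟨c / k, by positivity, ?_, ?_⟩
    · rw [div_lt_iff₀ hk'] at *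
      linarith [hck]
    · have : (k : ℝ) * (c / k) = c := by field_simp
      rw [this]
      exact oIio_mono (le_max_left _ _)
  constructor
  · -- first inequality
    rw [oIio_eq_iSup ((k:ℝ)*ε), map_iSup, inf_iSup_eq]
    apply iSup_le
    rintro ⟨b, hb⟩
    obtain ⟨η, hη0, hηε, hle⟩ := key b hb
    have hstep : g m (oIio (r - ε)) ⊓ g j (oIoi ((r - ε) + η)) ≤ f (oIoi ((k:ℝ) * η)) := by
      refine le_trans ?_ (hC m le_rfl j hj η hη0)
      refine le_trans le_sup_left (le_iSup (fun s => (g m (oIio s) ⊓ g j (oIoi (s + η))) ⊔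
        (g j (oIio s) ⊓ g m (oIoi (s + η)))) (r - ε))
    have hcov : (g j (oIio r) ⊔ g j (oIoi ((r - ε) + η))) = ⊤ := by
      rw [← map_sup, oIio_sup_oIoi _ _ (by linarith), map_top]
    calc g m (oIio (r - ε)) ⊓ f (oIio b)
        ≤ g m (oIio (r - ε)) ⊓ f (oIio ((k:ℝ)*η)) :=
          inf_le_inf_left _ (OrderHomClass.mono f hle)
      _ = (g m (oIio (r - ε)) ⊓ f (oIio ((k:ℝ)*η))) ⊓
            (g j (oIio r) ⊔ g j (oIoi ((r - ε) + η))) := by rw [hcov, inf_top_eq]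
      _ = ((g m (oIio (r - ε)) ⊓ f (oIio ((k:ℝ)*η))) ⊓ g j (oIio r)) ⊔
            ((g m (oIio (r - ε)) ⊓ f (oIio ((k:ℝ)*η))) ⊓ g j (oIoi ((r - ε) + η))) :=
          inf_sup_left _ _ _
      _ ≤ g j (oIio r) ⊔ ⊥ := by
          apply sup_le_sup inf_le_right
          have : (g m (oIio (r - ε)) ⊓ f (oIio ((k:ℝ)*η))) ⊓ g j (oIoi ((r - ε) + η)) ≤
              f (oIoi ((k:ℝ)*η)) ⊓ f (oIio ((k:ℝ)*η)) := by
            refine le_inf ?_ (le_trans inf_le_left inf_le_right)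
            refine le_trans ?_ hstep
            exact inf_le_inf_right _ inf_le_left
          refine le_trans this ?_
          rw [← map_inf, inf_comm, oIio_inf_oIoi, map_bot]
      _ ≤ g j (oIio r) := by simp
  · -- second inequality
    rw [oIio_eq_iSup ((k:ℝ)*ε), map_iSup, inf_iSup_eq]
    apply iSup_le
    rintro ⟨b, hb⟩
    obtain ⟨η, hη0, hηε, hle⟩ := key b hb
    have hs : (r + ε - η) + η = r + ε := by ring
    have hstep : g j (oIio (r + ε - η)) ⊓ g m (oIoi (r + ε)) ≤ f (oIoi ((k:ℝ) * η)) := by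
      refine le_trans ?_ (hC m le_rfl j hj η hη0)
      refine le_trans ?_ (le_iSup (fun s => (g m (oIio s) ⊓ g j (oIoi (s + η))) ⊔
        (g j (oIio s) ⊓ g m (oIoi (s + η)))) (r + ε - η))
      rw [hs]
      exact le_sup_right
    have hcov : (g j (oIio (r + ε - η)) ⊔ g j (oIoi r)) = ⊤ := by
      rw [← map_sup, oIio_sup_oIoi _ _ (by linarith), map_top]
    calc g m (oIoi (r + ε)) ⊓ f (oIio b)
        ≤ g m (oIoi (r + ε)) ⊓ f (oIio ((k:ℝ)*η)) :=
          inf_le_inf_left _ (OrderHomClass.mono f hle)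
      _ = (g m (oIoi (r + ε)) ⊓ f (oIio ((k:ℝ)*η))) ⊓
            (g j (oIio (r + ε - η)) ⊔ g j (oIoi r)) := by rw [hcov, inf_top_eq]
      _ = ((g m (oIoi (r + ε)) ⊓ f (oIio ((k:ℝ)*η))) ⊓ g j (oIio (r + ε - η))) ⊔
            ((g m (oIoi (r + ε)) ⊓ f (oIio ((k:ℝ)*η))) ⊓ g j (oIoi r)) :=
          inf_sup_left _ _ _
      _ ≤ ⊥ ⊔ g j (oIoi r) := by
          apply sup_le_sup _ inf_le_right
          have : (g m (oIoi (r + ε)) ⊓ f (oIio ((k:ℝ)*η))) ⊓ g j (oIio (r + ε - η)) ≤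
              f (oIoi ((k:ℝ)*η)) ⊓ f (oIio ((k:ℝ)*η)) := by
            refine le_inf ?_ (le_trans inf_le_left inf_le_right)
            refine le_trans ?_ hstep
            exact le_inf inf_le_right (inf_le_left.trans inf_le_left)
          refine le_trans this ?_
          rw [← map_inf, inf_comm, oIio_inf_oIoi, map_bot]
      _ ≤ g j (oIoi r) := by simp
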